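/- Let n ≥ 1, ω_f > 0, c̃ > 0, h₁ ∈ ℝⁿ, and let M, H be real n×n matrices. Define the (2n+1)×(2n+1) real block matrix X = [[0, −M, −c̃ h₁], [ω_f H, −ω_f Iₙ, 0], [ω_f h₁ᵀ, 0, −ω_f]] and Z := ω_f M H + ω_f c̃ h₁ h₁ᵀ. Then for every complex eigenvalue λ of X with λ ≠ −ω_f, there exists a complex eigenvalue λ̄ of Z such that λ² + ω_f λ + λ̄ = 0. -/
import Mathlib

noncomputable section
open Matrix Polynomial

/-- `μ ∈ ℂ` is an eigenvalue of the real matrix `A`, i.e. a root of its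
characteristic polynomial over `ℂ`. -/
def IsEig {m : Type} [Fintype m] [DecidableEq m] (A : Matrix m m ℝ) (μ : ℂ) : Prop :=
  ((A.charpoly).map (algebraMap ℝ ℂ)).IsRoot μ

/-- The `(2n+1) × (2n+1)` block matrix
`X = [[0, −M, −c̃ h₁], [ω_f H, −ω_f Iₙ, 0], [ω_f h₁ᵀ, 0, −ω_f]]`. -/
def Xmat (n : ℕ) (ωf ctil : ℝ) (h₁ : Fin n → ℝ) (M H : Matrix (Fin n) (Fin n) ℝ) :
    Matrix ((Fin n ⊕ Fin n) ⊕ Unit) ((Fin n ⊕ Fin n) ⊕ Unit) ℝ :=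
  Matrix.fromBlocks
    (Matrix.fromBlocks 0 (-M) (ωf • H) (-(ωf • (1 : Matrix (Fin n) (Fin n) ℝ))))
    (Matrix.of fun i (_ : Unit) => Sum.elim (fun j => -(ctil * h₁ j)) (fun _ => (0 : ℝ)) i)
    (Matrix.of fun (_ : Unit) j => Sum.elim (fun j' => ωf * h₁ j') (fun _ => (0 : ℝ)) j)
    (Matrix.of fun _ _ => -ωf)

/-- `Z := ω_f M H + ω_f c̃ h₁ h₁ᵀ`. -/
def Zmat (n : ℕ) (ωf ctil : ℝ) (h₁ : Fin n → ℝ) (M H : Matrix (Fin n) (Fin n) ℝ) :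
    Matrix (Fin n) (Fin n) ℝ :=
  ωf • (M * H) + (ωf * ctil) • Matrix.vecMulVec h₁ h₁

lemma eval_charpoly_det {m : Type} [Fintype m] [DecidableEq m] (A : Matrix m m ℂ) (μ : ℂ) :
    A.charpoly.eval μ = (μ • (1 : Matrix m m ℂ) - A).det := by
  rw [Matrix.charpoly, ← coe_evalRingHom, RingHom.map_det]
  congr 1
  ext i j
  by_cases h : i = j <;>
    simp [h, Matrix.charmatrix_apply, Matrix.diagonal_apply, Matrix.one_apply]

lemma isEig_iff {m : Type} [Fintype m] [DecidableEq m] (A : Matrix m m ℝ) (μ : ℂ) :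
    IsEig A μ ↔ ∃ v : m → ℂ, v ≠ 0 ∧ (A.map (algebraMap ℝ ℂ)).mulVec v = μ • v := by
  have h1 : IsEig A μ ↔ (μ • (1 : Matrix m m ℂ) - A.map (algebraMap ℝ ℂ)).det = 0 := by
    rw [IsEig, ← Matrix.charpoly_map, IsRoot, eval_charpoly_det]
  rw [h1, ← Matrix.exists_mulVec_eq_zero_iff]
  constructor
  · rintro ⟨v, hv, h⟩
    refine ⟨v, hv, ?_⟩
    rw [Matrix.sub_mulVec, Matrix.smul_mulVec, Matrix.one_mulVec, sub_eq_zero] at h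
    exact h.symm
  · rintro ⟨v, hv, h⟩
    exact ⟨v, hv, by rw [Matrix.sub_mulVec, Matrix.smul_mulVec, Matrix.one_mulVec, h,
      sub_self]⟩

theorem stmt0 (n : ℕ) (hn : 1 ≤ n) (ωf ctil : ℝ) (hωf : 0 < ωf) (hctil : 0 < ctil)
    (h₁ : Fin n → ℝ) (M H : Matrix (Fin n) (Fin n) ℝ) :
    ∀ lam : ℂ, IsEig (Xmat n ωf ctil h₁ M H) lam → lam ≠ -(ωf : ℂ) →
      ∃ lamBar : ℂ, IsEig (Zmat n ωf ctil h₁ M H) lamBar ∧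
        lam ^ 2 + (ωf : ℂ) * lam + lamBar = 0 := by
  intro lam hlam hne
  obtain ⟨v, hv, hEq⟩ := (isEig_iff _ _).mp hlam
  set x : Fin n → ℂ := fun i => v (Sum.inl (Sum.inl i)) with hx
  set y : Fin n → ℂ := fun i => v (Sum.inl (Sum.inr i)) with hy
  set z : ℂ := v (Sum.inr ()) with hz
  have hs : lam + (ωf : ℂ) ≠ 0 := by
    intro h; apply hne; linear_combination h
  -- componentwise equations
  have E1 : ∀ i, (∑ j, -(M i j : ℂ) * y j) + -(ctil * h₁ i : ℝ) * z = lam * x i := by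
    intro i
    have := congrFun hEq (Sum.inl (Sum.inl i))
    simpa [Matrix.mulVec, dotProduct, Fintype.sum_sum_type, Xmat,
      Matrix.fromBlocks] using this
  have E2 : ∀ i, (∑ j, (ωf * H i j : ℝ) * x j) + -(ωf : ℂ) * y i = lam * y i := by
    intro i
    have := congrFun hEq (Sum.inl (Sum.inr i))
    simpa [Matrix.mulVec, dotProduct, Fintype.sum_sum_type, Xmat,
      Matrix.fromBlocks, Matrix.one_apply, Finset.mul_sum, apply_ite,
      Finset.sum_ite_eq'] using this
  have E3 : (∑ j, (ωf * h₁ j : ℝ) * x j) + -(ωf : ℂ) * z = lam * z := by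
    have := congrFun hEq (Sum.inr ())
    simpa [Matrix.mulVec, dotProduct, Fintype.sum_sum_type, Xmat,
      Matrix.fromBlocks] using this
  -- solve for y and z
  have hy' : ∀ i, (lam + (ωf : ℂ)) * y i = (ωf : ℂ) * ∑ j, (H i j : ℂ) * x j := by
    intro i
    have e := E2 i
    have hc : ∑ j, ((ωf * H i j : ℝ) : ℂ) * x j = (ωf : ℂ) * ∑ j, (H i j : ℂ) * x j := by
      rw [Finset.mul_sum]; exact Finset.sum_congr rfl fun j _ => by push_cast; ring
    rw [hc] at e
    linear_combination -e
  have hz' : (lam + (ωf : ℂ)) * z = (ωf : ℂ) * ∑ j, (h₁ j : ℂ) * x j := by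
    have e := E3
    have hc : ∑ j, ((ωf * h₁ j : ℝ) : ℂ) * x j = (ωf : ℂ) * ∑ j, (h₁ j : ℂ) * x j := by
      rw [Finset.mul_sum]; exact Finset.sum_congr rfl fun j _ => by push_cast; ring
    rw [hc] at e
    linear_combination -e
  -- x is nonzero
  have hxne : x ≠ 0 := by
    intro h0
    apply hv
    have hy0 : ∀ i, y i = 0 := fun i => by
      have h := hy' i
      simp [h0, Pi.zero_apply] at h
      rcases h with h | h
      · exact absurd h hs
      · exact h
    have hz0 : z = 0 := by
      have h := hz'
      simp [h0, Pi.zero_apply] at h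
      rcases h with h | h
      · exact absurd h hs
      · exact h
    funext k
    rcases k with (i | i) | u
    · exact congrFun h0 i
    · exact hy0 i
    · cases u; exact hz0
  -- key eigen-equation for Z
  refine ⟨-(lam ^ 2 + (ωf : ℂ) * lam), ?_, by ring⟩
  rw [isEig_iff]
  refine ⟨x, hxne, ?_⟩
  funext i
  have s1 : (lam + (ωf : ℂ)) * ∑ j, -(M i j : ℂ) * y j
      = -((ωf : ℂ) * ∑ j, (M i j : ℂ) * ∑ k, (H j k : ℂ) * x k) := by
    rw [Finset.mul_sum, Finset.mul_sum, ← Finset.sum_neg_distrib]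
    refine Finset.sum_congr rfl fun j _ => ?_
    linear_combination (-(M i j : ℂ)) * hy' j
  have e1 := E1 i
  push_cast at e1
  have key : (ωf : ℂ) * ∑ j, (M i j : ℂ) * ∑ k, (H j k : ℂ) * x k
      + (ctil : ℂ) * (h₁ i : ℂ) * ((ωf : ℂ) * ∑ j, (h₁ j : ℂ) * x j)
      = -((lam + (ωf : ℂ)) * (lam * x i)) := by
    linear_combination (-(lam + (ωf : ℂ))) * e1 + s1 + (-(ctil : ℂ) * (h₁ i : ℂ)) * hz'
  have swap : ∑ j, (∑ k, (M i k : ℂ) * (H k j : ℂ)) * x j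
      = ∑ j, (M i j : ℂ) * ∑ k, (H j k : ℂ) * x k := by
    simp_rw [Finset.sum_mul, Finset.mul_sum]
    rw [Finset.sum_comm]
    exact Finset.sum_congr rfl fun k _ => Finset.sum_congr rfl fun j _ => by ring
  have lhs : ((Zmat n ωf ctil h₁ M H).map (algebraMap ℝ ℂ)).mulVec x i
      = (ωf : ℂ) * ∑ j, (M i j : ℂ) * ∑ k, (H j k : ℂ) * x k
        + (ωf : ℂ) * (ctil : ℂ) * (h₁ i : ℂ) * ∑ j, (h₁ j : ℂ) * x j := by
    simp only [Zmat, Matrix.mulVec, dotProduct, Matrix.map_apply, Matrix.add_apply,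
      Matrix.smul_apply, Matrix.mul_apply, Matrix.vecMulVec_apply, smul_eq_mul,
      Complex.coe_algebraMap]
    push_cast
    simp_rw [add_mul]
    rw [Finset.sum_add_distrib]
    congr 1
    · rw [← swap, Finset.mul_sum]
      exact Finset.sum_congr rfl fun j _ => by ring
    · rw [Finset.mul_sum]
      exact Finset.sum_congr rfl fun j _ => by ring
  rw [lhs]
  have hsm : (-(lam ^ 2 + (ωf : ℂ) * lam) • x) i = -(lam ^ 2 + (ωf : ℂ) * lam) * x i := rfl
  rw [hsm]
  linear_combination key
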